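/- Two functions τ₁, τ₂ ∈ T lie in the same connected component of the Z-transformation graph on T if and only if τ₁(v) = τ₂(v) for every vertex v that belongs to a nontrivial cluster. -/

import Mathlib

/-- A directed walk from `a` to `b` along edge relation `E`, recorded as the list of its
vertices. -/
def IsWalk {V : Type*} (E : V → V → Prop) (a b : V) (l : List V) : Prop :=
  l.head? = some a ∧ l.getLast? = some b ∧ l.Chain' E

/-- The total weight of a walk. -/
def walkWeight {V : Type*} (δ : V → V → ℤ) (l : List V) : ℤ :=
  ((l.zip l.tail).map fun p => δ p.1 p.2).sum

/-- A negative cycle: a directed walk from some vertex to itself with at least one edge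
and negative total weight. -/
def HasNegCycle {V : Type*} (E : V → V → Prop) (δ : V → V → ℤ) : Prop :=
  ∃ (a : V) (l : List V), IsWalk E a a l ∧ 2 ≤ l.length ∧ walkWeight δ l < 0

/-- The set `T` of admissible integer-valued functions normalized to vanish at `f₀`. -/
def Tset {V : Type*} (E : V → V → Prop) (δ : V → V → ℤ) (f₀ : V) : Set (V → ℤ) :=
  {τ | (∀ v w, E v w → τ w - τ v ≤ δ v w) ∧ τ f₀ = 0}

/-- Two elements of `T` differ by a `Z`-transformation if they agree at every vertex except
exactly one, where they differ by exactly `1`. -/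
def ZRel {V : Type*} (T : Set (V → ℤ)) (τ σ : V → ℤ) : Prop :=
  τ ∈ T ∧ σ ∈ T ∧ ∃ v, (∀ w, w ≠ v → σ w = τ w) ∧ (σ v = τ v + 1 ∨ σ v = τ v - 1)

/-!
Every admissible `τ` satisfies `τ w - τ v ≤ D v w`, so on a cluster the differences
`τ w - τ v = D v w` are forced and no `Z`-transformation can move a vertex of a nontrivial
cluster.

Conversely, let `σ₁ ≠ σ₂` agree on the nontrivial clusters, with `σ₁ - σ₂` attaining a positive
maximum `M`. If every vertex where `σ₁ - σ₂ = M` had a tight edge of `σ₁` to another vertex,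
these edges would stay inside that set and close a cycle of tight edges; such a cycle has weight
zero, so it lies in a nontrivial cluster, where `σ₁ = σ₂`. Hence some such vertex has only slack
outgoing edges, and lowering `σ₁` there by one is a `Z`-transformation staying in `T` that brings
`σ₁` closer to `σ₂` in `ℓ¹` distance.
-/

section Walks

variable {V : Type*} {E : V → V → Prop} {δ : V → V → ℤ}

lemma isWalk_singleton {a b x : V} : IsWalk E a b [x] ↔ x = a ∧ x = b := by
  simp [IsWalk, eq_comm, List.Chain']

lemma isWalk_cons_cons {a b x y : V} {l : List V} :
    IsWalk E a b (x :: y :: l) ↔ x = a ∧ E x y ∧ IsWalk E y b (y :: l) := by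
  simp only [IsWalk, List.head?_cons, Option.some.injEq, List.getLast?_cons_cons, List.Chain',
    List.isChain_cons_cons]
  tauto

lemma IsWalk.cons {a b c : V} {l : List V} (h : IsWalk E b c l) (hab : E a b) :
    IsWalk E a c (a :: l) := by
  obtain ⟨hhead, hlast, hchain⟩ := h
  refine ⟨rfl, ?_, List.isChain_cons.2 ⟨fun x hx => ?_, hchain⟩⟩
  · cases l with
    | nil => simp at hhead
    | cons z t => simpa [List.getLast?_cons_cons] using hlast
  · rw [hhead, Option.mem_some_iff] at hx
    exact hx ▸ hab

lemma walkWeight_singleton (x : V) : walkWeight δ [x] = 0 := by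
  simp [walkWeight]

lemma walkWeight_cons_cons (x y : V) (l : List V) :
    walkWeight δ (x :: y :: l) = δ x y + walkWeight δ (y :: l) := by
  simp [walkWeight]

lemma walkWeight_cons_of_isWalk {a b c : V} {l : List V} (h : IsWalk E b c l) :
    walkWeight δ (a :: l) = δ a b + walkWeight δ l := by
  obtain ⟨hhead, -, -⟩ := h
  cases l with
  | nil => simp at hhead
  | cons z t =>
    obtain rfl : z = b := by simpa using hhead
    exact walkWeight_cons_cons a z t

variable (E δ) in
def walkWeights (a b : V) : Set ℤ :=
  {x | ∃ l : List V, IsWalk E a b l ∧ walkWeight δ l = x}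

end Walks

section Admissible

variable {V : Type*} {E : V → V → Prop} {δ : V → V → ℤ}

variable (E δ) in
def Admissible (τ : V → ℤ) : Prop :=
  ∀ v w, E v w → τ w - τ v ≤ δ v w

variable (E δ) in
def IsTight (τ : V → ℤ) (v w : V) : Prop :=
  E v w ∧ δ v w = τ w - τ v

lemma Admissible.sub_le_walkWeight {τ : V → ℤ} (hτ : Admissible E δ τ) :
    ∀ {l : List V} {a b : V}, IsWalk E a b l → τ b - τ a ≤ walkWeight δ l
  | [], _, _, h => by simp [IsWalk] at h
  | [x], a, b, h => by
    obtain ⟨rfl, rfl⟩ := isWalk_singleton.1 h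
    simp [walkWeight_singleton]
  | x :: y :: l, a, b, h => by
    obtain ⟨rfl, hxy, hwalk⟩ := isWalk_cons_cons.1 h
    have := hτ x y hxy
    have := hτ.sub_le_walkWeight hwalk
    rw [walkWeight_cons_cons]
    omega

lemma Admissible.sub_le_of_isLeast {τ : V → ℤ} (hτ : Admissible E δ τ) {a b : V} {d : ℤ}
    (hd : IsLeast (walkWeights E δ a b) d) : τ b - τ a ≤ d := by
  obtain ⟨l, hl, rfl⟩ := hd.1
  exact hτ.sub_le_walkWeight hl

lemma exists_walk_of_reflTransGen_isTight {τ : V → ℤ} {a b : V}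
    (h : Relation.ReflTransGen (IsTight E δ τ) a b) :
    ∃ l, IsWalk E a b l ∧ walkWeight δ l = τ b - τ a := by
  induction h using Relation.ReflTransGen.head_induction_on with
  | refl => exact ⟨[b], isWalk_singleton.2 ⟨rfl, rfl⟩, by simp [walkWeight_singleton]⟩
  | head hac _ ih =>
    obtain ⟨l, hl, hw⟩ := ih
    refine ⟨_, hl.cons hac.1, ?_⟩
    rw [walkWeight_cons_of_isWalk hl, hw, hac.2]
    ring

lemma Admissible.eq_of_isLeast_of_reflTransGen {τ : V → ℤ} (hτ : Admissible E δ τ) {a b : V}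
    {d : ℤ} (hd : IsLeast (walkWeights E δ a b) d)
    (h : Relation.ReflTransGen (IsTight E δ τ) a b) : d = τ b - τ a := by
  obtain ⟨l, hl, hw⟩ := exists_walk_of_reflTransGen_isTight h
  exact le_antisymm (hw ▸ hd.2 ⟨l, hl, rfl⟩) (hτ.sub_le_of_isLeast hd)

end Admissible

section Clusters

variable {V : Type*} {E : V → V → Prop} {δ : V → V → ℤ} {D : V → V → ℤ}

def InNontrivialCluster (D : V → V → ℤ) (v : V) : Prop :=
  ∃ w, w ≠ v ∧ D v w + D w v = 0

lemma Admissible.sub_eq_of_cluster {τ : V → ℤ} (hτ : Admissible E δ τ)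
    (hD : ∀ v w, IsLeast (walkWeights E δ v w) (D v w)) {v w : V} (hvw : D v w + D w v = 0) :
    τ w - τ v = D v w := by
  have := hτ.sub_le_of_isLeast (hD v w)
  have := hτ.sub_le_of_isLeast (hD w v)
  omega

/-- A cycle of tight edges has weight zero, so it lies in a cluster. -/
lemma Admissible.inNontrivialCluster_of_transGen {τ : V → ℤ} (hτ : Admissible E δ τ)
    (hD : ∀ v w, IsLeast (walkWeights E δ v w) (D v w)) {R : V → V → Prop}
    (hR : ∀ x y, R x y → y ≠ x ∧ IsTight E δ τ x y) {c : V} (hc : Relation.TransGen R c c) :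
    InNontrivialCluster D c := by
  obtain ⟨d, hcd, hdc⟩ := Relation.TransGen.head'_iff.1 hc
  have tight : Relation.ReflTransGen R ≤ Relation.ReflTransGen (IsTight E δ τ) :=
    Relation.ReflTransGen.mono fun x y h => (hR x y h).2
  refine ⟨d, (hR c d hcd).1, ?_⟩
  rw [hτ.eq_of_isLeast_of_reflTransGen (hD c d) (tight _ _ (.single hcd)),
    hτ.eq_of_isLeast_of_reflTransGen (hD d c) (tight _ _ hdc)]
  ring

lemma ZRel.apply_eq_of_inNontrivialCluster {f₀ : V} {τ σ : V → ℤ}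
    (h : ZRel (Tset E δ f₀) τ σ) (hD : ∀ v w, IsLeast (walkWeights E δ v w) (D v w)) {v : V}
    (hv : InNontrivialCluster D v) : τ v = σ v := by
  obtain ⟨hτ, hσ, u, hfix, hu⟩ := h
  obtain ⟨w, hwv, hvw⟩ := hv
  by_cases huv : u = v
  · subst huv
    have := Admissible.sub_eq_of_cluster hτ.1 hD hvw
    have := Admissible.sub_eq_of_cluster hσ.1 hD hvw
    have := hfix w hwv
    omega
  · exact (hfix v (Ne.symm huv)).symm

lemma Relation.ReflTransGen.apply_eq_of_inNontrivialCluster {f₀ : V} {τ σ : V → ℤ}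
    (h : Relation.ReflTransGen (ZRel (Tset E δ f₀)) τ σ)
    (hD : ∀ v w, IsLeast (walkWeights E δ v w) (D v w)) {v : V}
    (hv : InNontrivialCluster D v) : τ v = σ v := by
  induction h with
  | refl => rfl
  | tail _ hstep ih => exact ih.trans (hstep.apply_eq_of_inNontrivialCluster hD hv)

end Clusters

lemma Finite.exists_transGen_self {α : Type*} [Finite α] {r : α → α → Prop} {s : Set α}
    (hs : s.Nonempty) (h : ∀ a ∈ s, ∃ b ∈ s, r a b) : ∃ a ∈ s, Relation.TransGen r a a := by
  by_contra! hacyclic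
  let r' : α → α → Prop := fun a b => a ∈ s ∧ b ∈ s ∧ r a b
  have hsub : ∀ {a b}, Relation.TransGen r' a b → a ∈ s ∧ Relation.TransGen r a b := by
    intro a b hab
    induction hab with
    | single h => exact ⟨h.1, .single h.2.2⟩
    | tail _ h ih => exact ⟨ih.1, ih.2.tail h.2.2⟩
  have : IsTrans α (flip (Relation.TransGen r')) := ⟨fun _ _ _ hab hbc => hbc.trans hab⟩
  have : Std.Irrefl (flip (Relation.TransGen r')) :=
    ⟨fun a ha => hacyclic a (hsub ha).1 (hsub ha).2⟩
  obtain ⟨a, ha, hmax⟩ :=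
    (Finite.wellFounded_of_trans_of_irrefl (flip (Relation.TransGen r'))).has_min s hs
  obtain ⟨b, hb, hab⟩ := h a ha
  exact hmax b hb (.single ⟨ha, hb, hab⟩)

section Descent

variable {V : Type*} {E : V → V → Prop} {δ : V → V → ℤ} {D : V → V → ℤ}

lemma exists_max_sub_forall_not_isTight [Finite V] {σ₁ σ₂ : V → ℤ}
    (hσ₁ : Admissible E δ σ₁) (hσ₂ : Admissible E δ σ₂)
    (hD : ∀ v w, IsLeast (walkWeights E δ v w) (D v w))
    (hagree : ∀ v, InNontrivialCluster D v → σ₁ v = σ₂ v) {m : V}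
    (hm : ∀ v, σ₁ v - σ₂ v ≤ σ₁ m - σ₂ m) (hm₀ : σ₁ m ≠ σ₂ m) :
    ∃ u, σ₁ u - σ₂ u = σ₁ m - σ₂ m ∧ ∀ w, w ≠ u → ¬ IsTight E δ σ₁ u w := by
  set M := σ₁ m - σ₂ m
  by_contra! hall
  let R : V → V → Prop := fun x y => σ₁ x - σ₂ x = M ∧ y ≠ x ∧ IsTight E δ σ₁ x y
  -- `σ₂ b - σ₂ a ≤ δ a b = σ₁ b - σ₁ a`, so `σ₁ - σ₂` cannot drop along a tight edge of `σ₁`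
  have hstep : ∀ a, σ₁ a - σ₂ a = M → ∃ b, σ₁ b - σ₂ b = M ∧ R a b := by
    intro a ha
    obtain ⟨b, hba, hab, hδ⟩ := hall a ha
    have := hσ₂ a b hab
    have := hm b
    exact ⟨b, by omega, ha, hba, hab, hδ⟩
  obtain ⟨c, hcM, hc⟩ :=
    Finite.exists_transGen_self (s := {x | σ₁ x - σ₂ x = M}) (r := R) ⟨m, rfl⟩ hstep
  have := hagree c (hσ₁.inNontrivialCluster_of_transGen hD (fun x y h => h.2) hc)
  exact hm₀ (by simp only [Set.mem_ofPred_eq] at hcM; omega)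

lemma Admissible.update_sub_one {τ : V → ℤ} [DecidableEq V] (hτ : Admissible E δ τ) {u : V}
    (hu : ∀ w, w ≠ u → ¬ IsTight E δ τ u w) :
    Admissible E δ (Function.update τ u (τ u - 1)) := by
  intro v w hvw
  have := hτ v w hvw
  by_cases hv : v = u <;> by_cases hw : w = u
  · subst hv hw; simpa using this
  · subst hv
    have : δ v w ≠ τ w - τ v := fun h => hu w hw ⟨hvw, h⟩
    rw [Function.update_of_ne hw, Function.update_self]
    omega
  · subst hw
    rw [Function.update_of_ne hv, Function.update_self]
    omega
  · rwa [Function.update_of_ne hv, Function.update_of_ne hw]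

lemma exists_update_sub_one_mem_Tset [Finite V] [DecidableEq V] {f₀ : V} {σ₁ σ₂ : V → ℤ}
    (hσ₁ : σ₁ ∈ Tset E δ f₀) (hσ₂ : σ₂ ∈ Tset E δ f₀)
    (hD : ∀ v w, IsLeast (walkWeights E δ v w) (D v w))
    (hagree : ∀ v, InNontrivialCluster D v → σ₁ v = σ₂ v) {v₀ : V} (hv₀ : σ₂ v₀ < σ₁ v₀) :
    ∃ u, σ₂ u < σ₁ u ∧ Function.update σ₁ u (σ₁ u - 1) ∈ Tset E δ f₀ := by
  have : Nonempty V := ⟨v₀⟩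
  obtain ⟨m, hm⟩ := Finite.exists_max fun v => σ₁ v - σ₂ v
  have := hm v₀
  obtain ⟨u, huM, hu⟩ := exists_max_sub_forall_not_isTight hσ₁.1 hσ₂.1 hD hagree hm (by omega)
  have hu₀ : f₀ ≠ u := by
    rintro rfl
    have := hσ₁.2
    have := hσ₂.2
    omega
  exact ⟨u, by omega, Admissible.update_sub_one hσ₁.1 hu,
    by rw [Function.update_of_ne hu₀]; exact hσ₁.2⟩

lemma ZRel.symm {T : Set (V → ℤ)} {τ σ : V → ℤ} (h : ZRel T τ σ) : ZRel T σ τ := by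
  obtain ⟨hτ, hσ, v, hfix, hv⟩ := h
  exact ⟨hσ, hτ, v, fun w hw => (hfix w hw).symm, by omega⟩

instance (T : Set (V → ℤ)) : Std.Symm (ZRel T) :=
  ⟨fun _ _ => ZRel.symm⟩

variable [Fintype V]

def l1Dist (σ₁ σ₂ : V → ℤ) : ℕ :=
  ∑ v, (σ₁ v - σ₂ v).natAbs

lemma l1Dist_comm (σ₁ σ₂ : V → ℤ) : l1Dist σ₁ σ₂ = l1Dist σ₂ σ₁ :=
  Finset.sum_congr rfl fun v _ => by omega

lemma l1Dist_update_sub_one [DecidableEq V] {σ₁ σ₂ : V → ℤ} {u : V} (hu : σ₂ u < σ₁ u) :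
    l1Dist (Function.update σ₁ u (σ₁ u - 1)) σ₂ + 1 = l1Dist σ₁ σ₂ := by
  have key : ∀ v, (Function.update σ₁ u (σ₁ u - 1) v - σ₂ v).natAbs + (if v = u then 1 else 0)
      = (σ₁ v - σ₂ v).natAbs := by
    intro v
    by_cases hv : v = u
    · subst hv; simp only [Function.update_self, if_true]; omega
    · simp [hv]
  simp only [l1Dist, ← Finset.sum_congr rfl fun v _ => key v, Finset.sum_add_distrib,
    Finset.sum_ite_eq', Finset.mem_univ, if_true]

lemma reflTransGen_zRel_of_agree {f₀ : V} (hD : ∀ v w, IsLeast (walkWeights E δ v w) (D v w)) :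
    ∀ (n : ℕ) {σ₁ σ₂ : V → ℤ}, σ₁ ∈ Tset E δ f₀ → σ₂ ∈ Tset E δ f₀ →
      (∀ v, InNontrivialCluster D v → σ₁ v = σ₂ v) → l1Dist σ₁ σ₂ = n →
      Relation.ReflTransGen (ZRel (Tset E δ f₀)) σ₁ σ₂
  | 0, σ₁, σ₂, _, _, _, hn => by
    have : σ₁ = σ₂ := funext fun v => by
      have := (Finset.sum_eq_zero_iff.1 hn) v (Finset.mem_univ v)
      omega
    exact this ▸ .refl
  | n + 1, σ₁, σ₂, hσ₁, hσ₂, hagree, hn => by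
    classical
    wlog hv₀ : ∃ v₀, σ₂ v₀ < σ₁ v₀ generalizing σ₁ σ₂
    · obtain ⟨v₀, hv₀'⟩ : ∃ v₀, σ₁ v₀ < σ₂ v₀ := by
        by_contra! hle
        have : σ₁ = σ₂ := funext fun v => le_antisymm (not_lt.1 (hv₀ ⟨v, ·⟩)) (hle v)
        simp [this, l1Dist] at hn
      exact Relation.ReflTransGen.stdSymm.symm _ _ <| this σ₂ σ₁ hσ₂ hσ₁
        (fun v hv => (hagree v hv).symm) (l1Dist_comm σ₁ σ₂ ▸ hn) ⟨v₀, hv₀'⟩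
    obtain ⟨v₀, hv₀⟩ := hv₀
    obtain ⟨u, hu, hmem⟩ := exists_update_sub_one_mem_Tset hσ₁ hσ₂ hD hagree hv₀
    have hagree' : ∀ v, InNontrivialCluster D v → Function.update σ₁ u (σ₁ u - 1) v = σ₂ v := by
      intro v hv
      have hvu : v ≠ u := by rintro rfl; exact hu.ne' (hagree v hv)
      rw [Function.update_of_ne hvu, hagree v hv]
    have hmove : ZRel (Tset E δ f₀) σ₁ (Function.update σ₁ u (σ₁ u - 1)) :=
      ⟨hσ₁, hmem, u, fun w hw => Function.update_of_ne hw _ _, .inr (Function.update_self ..)⟩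
    have hdist := l1Dist_update_sub_one (σ₂ := σ₂) hu
    exact .head hmove (reflTransGen_zRel_of_agree hD n hmem hσ₂ hagree' (by omega))

end Descent

theorem zGraph_component_iff_agree_on_nontrivial_clusters_general
    {V : Type*} [Fintype V] (E : V → V → Prop) (δ : V → V → ℤ)
    (D : V → V → ℤ)
    (hD : ∀ v w, IsLeast {x : ℤ | ∃ l : List V, IsWalk E v w l ∧ walkWeight δ l = x} (D v w))
    (f₀ : V) (τ₁ τ₂ : V → ℤ)
    (h₁ : τ₁ ∈ Tset E δ f₀) (h₂ : τ₂ ∈ Tset E δ f₀) :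
    Relation.ReflTransGen (ZRel (Tset E δ f₀)) τ₁ τ₂ ↔
      ∀ v : V, (∃ w, w ≠ v ∧ D v w + D w v = 0) → τ₁ v = τ₂ v :=
  ⟨fun h _ hv => h.apply_eq_of_inNontrivialCluster hD hv,
    fun hagree => reflTransGen_zRel_of_agree hD _ h₁ h₂ hagree rfl⟩

/-- Two functions `τ₁, τ₂ ∈ T` lie in the same connected component of the
`Z`-transformation graph on `T` iff they agree at every vertex belonging to a nontrivial
cluster (a vertex `v` for which there is `w ≠ v` with `D v w + D w v = 0`). -/
theorem zGraph_component_iff_agree_on_nontrivial_clusters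
    {V : Type*} [Fintype V] (E : V → V → Prop) (δ : V → V → ℤ)
    (hsymm : ∀ v w, E v w ↔ E w v)
    (hconn : ∀ v w : V, ∃ l : List V, IsWalk E v w l)
    (hnoneg : ¬ HasNegCycle E δ)
    (D : V → V → ℤ)
    (hD : ∀ v w, IsLeast {x : ℤ | ∃ l : List V, IsWalk E v w l ∧ walkWeight δ l = x} (D v w))
    (f₀ : V) (τ₁ τ₂ : V → ℤ)
    (h₁ : τ₁ ∈ Tset E δ f₀) (h₂ : τ₂ ∈ Tset E δ f₀) :
    Relation.ReflTransGen (ZRel (Tset E δ f₀)) τ₁ τ₂ ↔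
      ∀ v : V, (∃ w, w ≠ v ∧ D v w + D w v = 0) → τ₁ v = τ₂ v :=
  zGraph_component_iff_agree_on_nontrivial_clusters_general E δ D hD f₀ τ₁ τ₂ h₁ h₂
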